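/- arXiv:1603.01817 — 4 statements merged into one kernel-verified Lean document; each statement's English description precedes it below -/
import Mathlib

section
/- Let E be a saturated profile with r_max ≤ Γ−3w, and assume the variance symmetry (1/Γ)·Σ_{r=1}^Γ J_{r,k} = 1 for k ∈ {2w+1,…,Γ−2w}. Then the change of the entropy part of the coupled potential under the shift satisfies S_c(E) − S_c(S(E)) = S_u(Σ(E_max)) − S_u(Σ(E_0)), where S_c(E) := Σ_{c=1}^Γ S_u(Σ_c(E)); in particular Σ_c(E) = Σ_{c+1}(S(E)) for all c ∈ {2w+1,…,Γ−2w−1}, Σ_{2w+1}(S(E)) = Σ(E_0), and Σ_{Γ−2w}(E) = Σ(E_max). -/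
open MeasureTheory ProbabilityTheory Filter Finset Real

noncomputable section

/-- Product of `B` i.i.d. standard Gaussians on `Fin B → ℝ` (law of `z`). -/
def stdGauss (B : ℕ) : Measure (Fin B → ℝ) :=
  Measure.pi fun _ => gaussianReal 0 1

/-- The `j`-th standard basis vector of `ℝ^B` (a section). -/
def basisVec (B : ℕ) (j : Fin B) : Fin B → ℝ := fun k => if k = j then 1 else 0

/-- The MMSE denoiser `f_i(Σ)` of the effective Gaussian channel. -/
def denoiser (B : ℕ) (Sn : ℝ) (s z : Fin B → ℝ) (i : Fin B) : ℝ :=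
  (1 + ∑ k ∈ Finset.univ.erase i,
      Real.exp ((s k - s i) * Real.logb 2 B / Sn ^ 2 +
        (z k - z i) * Real.sqrt (Real.logb 2 B) / Sn))⁻¹

/-- `E_{s,z}[ ∑_{i=1}^B (f_i(Σ) - s_i)^2 ]`, with `s` uniform over the basis vectors
and `z` i.i.d. standard Gaussian: the MMSE of the effective `B`-dimensional channel. -/
def mmseB (B : ℕ) (Sn : ℝ) : ℝ :=
  (B : ℝ)⁻¹ * ∑ j : Fin B,
    ∫ z, (∑ i, (denoiser B Sn (basisVec B j) z i - basisVec B j i) ^ 2) ∂ stdGauss B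

/-- Effective noise `Σ(E) = √(R(σ² + E))`. -/
def sigU (R σ2 E : ℝ) : ℝ := Real.sqrt (R * (σ2 + E))

/-- State evolution operator of the underlying system. -/
def Tu (B : ℕ) (R σ2 E : ℝ) : ℝ := mmseB B (sigU R σ2 E)

/-- Energy term of the underlying potential. -/
def Uu (R σ2 E : ℝ) : ℝ :=
  (1 / (2 * R)) * Real.logb 2 ((σ2 + E) * Real.exp (-(E / (σ2 + E))))

/-- Entropy term of the underlying potential,
`S_u(Σ) = E_z[log_B(1 + ∑_{i=2}^B e_i(Σ))]`. -/
def Su (B : ℕ) (Sn : ℝ) : ℝ :=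
  if h : 0 < B then
    letI : NeZero B := ⟨h.ne'⟩
    ∫ z, Real.logb B (1 + ∑ i ∈ Finset.univ.erase (0 : Fin B),
        Real.exp ((z i - z 0) * Real.sqrt (Real.logb 2 B) / Sn -
          Real.logb 2 B / Sn ^ 2)) ∂ stdGauss B
  else 0

/-- Potential of the underlying system. -/
def Fu (B : ℕ) (R σ2 E : ℝ) : ℝ := Uu R σ2 E - Su B (sigU R σ2 E)

/-- The MSE floor `E₀ = lim_t T_u^{(t)}(0)`. -/
def mseFloor (B : ℕ) (R σ2 : ℝ) : ℝ :=
  limUnder atTop fun t : ℕ => (Tu B R σ2)^[t] 0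

/-- Basin of attraction `𝒱₀` of the MSE floor. -/
def basin (B : ℕ) (R σ2 : ℝ) : Set ℝ :=
  {E | E ∈ Set.Icc (0:ℝ) 1 ∧
    Tendsto (fun t : ℕ => (Tu B R σ2)^[t] E) atTop (nhds (mseFloor B R σ2))}

/-- Free energy gap `ΔF_u` (`+∞` if the complement of the basin is empty). -/
def gapFu (B : ℕ) (R σ2 : ℝ) : EReal :=
  ⨅ E ∈ Set.Icc (0:ℝ) 1 \ basin B R σ2,
    ((Fu B R σ2 E - Fu B R σ2 (mseFloor B R σ2) : ℝ) : EReal)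

/-- Potential threshold `R_pot`. -/
def Rpot (B : ℕ) (σ2 : ℝ) : ℝ :=
  sSup {R : ℝ | 0 < R ∧ 0 < gapFu B R σ2}

/-- Effective noise `Σ_c(E)` of block `c` in the coupled system. -/
def sigC (R σ2 : ℝ) (Γ : ℕ) (J : Fin Γ → Fin Γ → ℝ) (E : Fin Γ → ℝ) (c : Fin Γ) : ℝ :=
  (Real.sqrt ((Γ : ℝ)⁻¹ * ∑ r, J r c / (R * (σ2 + E r))))⁻¹

/-- Coupled state evolution operator `[T_c(E)]_r`. -/
def Tc (B : ℕ) (R σ2 : ℝ) (Γ : ℕ) (J : Fin Γ → Fin Γ → ℝ) (E : Fin Γ → ℝ) (r : Fin Γ) : ℝ :=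
  (Γ : ℝ)⁻¹ * ∑ c, J r c * mmseB B (sigC R σ2 Γ J E c)

/-- Coupled potential `F_c`. -/
def Fc (B : ℕ) (R σ2 : ℝ) (Γ : ℕ) (J : Fin Γ → Fin Γ → ℝ) (E : Fin Γ → ℝ) : ℝ :=
  (∑ r, Uu R σ2 (E r)) - ∑ c, Su B (sigC R σ2 Γ J E c)

/-- Shift operator: `[S(E)]_1 = E₀`, `[S(E)]_r = E_{r-1}` (0-based indexing). -/
def shiftProf (Γ : ℕ) (E0v : ℝ) (E : Fin Γ → ℝ) (r : Fin Γ) : ℝ :=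
  if r.1 = 0 then E0v else E ⟨r.1 - 1, lt_of_le_of_lt (Nat.sub_le _ _) r.isLt⟩

/-- Partial derivative of a function of a profile with respect to coordinate `r`. -/
def pderiv (Γ : ℕ) (F : (Fin Γ → ℝ) → ℝ) (r : Fin Γ) (P : Fin Γ → ℝ) : ℝ :=
  deriv (fun x => F (Function.update P r x)) (P r)

/-- Coupled SE operator with the pinning condition enforced on
`A = {1,…,3w} ∪ {Γ-3w+1,…,Γ}` (in 0-based indexing: `r < 3w` or `r ≥ Γ-3w`). -/
def TcPin (B : ℕ) (R σ2 : ℝ) (Γ w : ℕ) (J : Fin Γ → Fin Γ → ℝ) (E : Fin Γ → ℝ) (r : Fin Γ) : ℝ :=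
  if r.1 < 3*w ∨ Γ - 3*w ≤ r.1 then 0 else Tc B R σ2 Γ J E r

/-- All-ones initial profile, pinned to `0` on the pinning set `A`. -/
def onesPin (Γ w : ℕ) : Fin Γ → ℝ :=
  fun r => if r.1 < 3*w ∨ Γ - 3*w ≤ r.1 then 0 else 1

/-- Large section size (`B → ∞`) limit of the underlying potential. -/
def phiLim (R σ2 E : ℝ) : ℝ :=
  (1/(2*R)) * Real.logb 2 ((σ2 + E) * Real.exp (-(E/(σ2+E)))) -
    max 0 (1 - 1/(2 * Real.log 2 * R * (σ2 + E)))

/-- the change of the entropy part of the coupled potential under the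
shift telescopes, with the stated identifications of the boundary effective noises. -/
theorem telescoping_entropy_term
    (B : ℕ) (hB : 2 ≤ B) (R σ2 : ℝ) (hR : 0 < R) (hσ2 : 0 < σ2)
    (Γ w : ℕ) (hw : 0 < w) (hΓ : 8 * w < Γ)
    (g : ℝ → ℝ) (g0 gs : ℝ) (hg0 : 0 < g0) (hgs : 0 ≤ gs)
    (hsupp : ∀ x : ℝ, 1 < |x| → g x = 0)
    (hlow : ∀ x : ℝ, |x| ≤ 1 → g0 ≤ g x)
    (hlip : ∀ x ∈ Set.Icc (-1:ℝ) 1, ∀ y ∈ Set.Icc (-1:ℝ) 1, |g x - g y| ≤ gs * |x - y|)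
    (hgnorm : (2*(w:ℝ)+1)⁻¹ * ∑ k ∈ Finset.Icc (-(w:ℤ)) (w:ℤ), g ((k:ℝ)/(w:ℝ)) = 1)
    (γv : Fin Γ → ℝ) (hγ : ∀ r, 0 < γv r)
    (J : Fin Γ → Fin Γ → ℝ)
    (hJ : ∀ r c : Fin Γ, J r c = γv r * (Γ:ℝ) * g (((r.1:ℝ) - (c.1:ℝ))/(w:ℝ)) / (2*(w:ℝ)+1))
    (hrow : ∀ r : Fin Γ, (Γ:ℝ)⁻¹ * ∑ c, J r c = 1)
    (hsym : ∀ k : Fin Γ, 2*w ≤ k.1 → k.1 < Γ - 2*w → (Γ:ℝ)⁻¹ * ∑ r, J r k = 1)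
    (E0v Emax : ℝ) (hE0v : E0v ∈ Set.Icc (0:ℝ) 1)
    (E : Fin Γ → ℝ) (rstar rmax : Fin Γ)
    (hbox : ∀ r, E r ∈ Set.Icc (0:ℝ) 1)
    (hmono : ∀ r r' : Fin Γ, r ≤ r' → E r ≤ E r')
    (hrsm : rstar ≤ rmax)
    (hrstarloc : 3*w ≤ rstar.1)
    (hrmaxloc : rmax.1 + 1 ≤ Γ - 3*w)
    (hplat0 : ∀ r, r ≤ rstar → E r = E0v)
    (hplatmax : ∀ r, rmax ≤ r → E r = Emax) :
    ((∑ c : Fin Γ, Su B (sigC R σ2 Γ J E c)) -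
        ∑ c : Fin Γ, Su B (sigC R σ2 Γ J (shiftProf Γ E0v E) c) =
      Su B (sigU R σ2 Emax) - Su B (sigU R σ2 E0v)) ∧
    (∀ c : Fin Γ, (hc1 : 2*w ≤ c.1) → (hc2 : c.1 + 2 ≤ Γ - 2*w) →
      sigC R σ2 Γ J E c =
        sigC R σ2 Γ J (shiftProf Γ E0v E) ⟨c.1 + 1, by omega⟩) ∧
    (sigC R σ2 Γ J (shiftProf Γ E0v E) ⟨2*w, by omega⟩ = sigU R σ2 E0v) ∧
    (sigC R σ2 Γ J E ⟨Γ - 2*w - 1, by omega⟩ = sigU R σ2 Emax) := by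
  have hwR : (0:ℝ) < (w:ℝ) := by exact_mod_cast hw
  have hΓ0 : (0:ℝ) < (Γ:ℝ) := by exact_mod_cast (by omega : 0 < Γ)
  have h2w1 : (0:ℝ) < 2*(w:ℝ)+1 := by positivity
  -- support of J
  have hJ0 : ∀ r c : Fin Γ, ¬(c.1 ≤ r.1 + w ∧ r.1 ≤ c.1 + w) → J r c = 0 := by
    intro r c h
    have habs : (w:ℝ) < |((r.1:ℝ) - (c.1:ℝ))| := by
      rcases (by omega : r.1 + w < c.1 ∨ c.1 + w < r.1) with h1 | h1
      · have h2 : (r.1:ℝ) + w < c.1 := by exact_mod_cast h1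
        exact lt_abs.mpr (Or.inr (by linarith))
      · have h2 : (c.1:ℝ) + w < r.1 := by exact_mod_cast h1
        exact lt_abs.mpr (Or.inl (by linarith))
    have hg : g (((r.1:ℝ) - (c.1:ℝ))/(w:ℝ)) = 0 := by
      apply hsupp
      rw [abs_div, abs_of_pos hwR, one_lt_div hwR]
      exact habs
    rw [hJ, hg]; ring
  -- the inside-normalization of g
  have hgsumZ : ∑ k ∈ Finset.Icc (-(w:ℤ)) (w:ℤ), g ((k:ℝ)/(w:ℝ)) = 2*(w:ℝ)+1 := by
    have h := hgnorm
    field_simp at h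
    linarith
  -- interior rows have γ = 1
  have hγ1 : ∀ r : Fin Γ, w ≤ r.1 → r.1 + w < Γ → γv r = 1 := by
    intro r hr1 hr2
    have hsum : ∑ c : Fin Γ, g (((r.1:ℝ) - (c.1:ℝ))/(w:ℝ)) = 2*(w:ℝ)+1 := by
      have e1 : ∑ c : Fin Γ, g (((r.1:ℝ) - (c.1:ℝ))/(w:ℝ))
          = ∑ n ∈ Finset.range Γ, g (((r.1:ℝ) - (n:ℝ))/(w:ℝ)) :=
        Fin.sum_univ_eq_sum_range (fun n => g (((r.1:ℝ) - (n:ℝ))/(w:ℝ))) Γ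
      have e2 : ∑ n ∈ Finset.range Γ, g (((r.1:ℝ) - (n:ℝ))/(w:ℝ))
          = ∑ n ∈ Finset.Icc (r.1 - w) (r.1 + w), g (((r.1:ℝ) - (n:ℝ))/(w:ℝ)) := by
        symm
        apply Finset.sum_subset
        · intro n hn
          simp only [Finset.mem_Icc] at hn
          exact Finset.mem_range.mpr (by omega)
        · intro n _ hn'
          simp only [Finset.mem_Icc, not_and_or, not_le] at hn'
          apply hsupp
          rw [abs_div, abs_of_pos hwR, one_lt_div hwR]
          rcases hn' with h1 | h1
          · have h2 : (n:ℝ) + w < r.1 := by exact_mod_cast (by omega : n + w < r.1)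
            exact lt_abs.mpr (Or.inl (by linarith))
          · have h2 : (r.1:ℝ) + w < n := by exact_mod_cast (by omega : r.1 + w < n)
            exact lt_abs.mpr (Or.inr (by linarith))
      have e3 : ∑ n ∈ Finset.Icc (r.1 - w) (r.1 + w), g (((r.1:ℝ) - (n:ℝ))/(w:ℝ))
          = ∑ k ∈ Finset.Icc (-(w:ℤ)) (w:ℤ), g ((k:ℝ)/(w:ℝ)) := by
        refine Finset.sum_nbij' (i := fun n => (r.1:ℤ) - n)
          (j := fun k => ((r.1:ℤ) - k).toNat) ?_ ?_ ?_ ?_ ?_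
        · intro n hn
          simp only [Finset.mem_Icc] at hn ⊢
          omega
        · intro k hk
          simp only [Finset.mem_Icc] at hk ⊢
          omega
        · intro n hn
          simp only [Finset.mem_Icc] at hn
          exact (by omega : ((r.1:ℤ) - ((r.1:ℤ) - (n:ℤ))).toNat = n)
        · intro k hk
          simp only [Finset.mem_Icc] at hk
          exact (by omega : (r.1:ℤ) - ((((r.1:ℤ) - k).toNat : ℕ) : ℤ) = k)
        · intro n hn
          simp only [Finset.mem_Icc] at hn
          congr 1
          push_cast [Int.toNat_of_nonneg]
          ring
      rw [e1, e2, e3, hgsumZ]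
    have hsJ : ∑ c : Fin Γ, J r c = γv r * (Γ:ℝ) := by
      calc ∑ c : Fin Γ, J r c
          = ∑ c : Fin Γ, γv r * (Γ:ℝ) / (2*(w:ℝ)+1) * g (((r.1:ℝ)-(c.1:ℝ))/(w:ℝ)) := by
            refine Finset.sum_congr rfl fun c _ => ?_
            rw [hJ]; ring
        _ = γv r * (Γ:ℝ) / (2*(w:ℝ)+1) * ∑ c : Fin Γ, g (((r.1:ℝ)-(c.1:ℝ))/(w:ℝ)) := by
            rw [Finset.mul_sum]
        _ = γv r * (Γ:ℝ) := by
            rw [hsum]; field_simp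
    have h1 := hrow r
    rw [hsJ] at h1
    have hΓne : (Γ:ℝ) ≠ 0 := hΓ0.ne'
    field_simp at h1
    exact h1
  have hJint : ∀ (r : Fin Γ), w ≤ r.1 → r.1 + w < Γ → ∀ c : Fin Γ,
      J r c = (Γ:ℝ) * g (((r.1:ℝ) - (c.1:ℝ))/(w:ℝ)) / (2*(w:ℝ)+1) := by
    intro r h1 h2 c
    rw [hJ, hγ1 r h1 h2, one_mul]
  -- shifted-index equality of J in the bulk
  have hJshift : ∀ (n : ℕ) (hn : n + 1 < Γ) (hn0 : n < Γ) (c : Fin Γ)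
      (hc1 : 2*w ≤ c.1) (hc2 : c.1 + 2 ≤ Γ - 2*w) (hc' : c.1 + 1 < Γ),
      J ⟨n, hn0⟩ c = J ⟨n+1, hn⟩ ⟨c.1+1, hc'⟩ := by
    intro n hn hn0 c hc1 hc2 hc'
    by_cases hs : c.1 ≤ n + w ∧ n ≤ c.1 + w
    · have ha1 : w ≤ n := by omega
      have ha2 : n + w < Γ := by omega
      have hb1 : w ≤ n + 1 := by omega
      have hb2 : (n + 1) + w < Γ := by omega
      rw [hJint ⟨n, hn0⟩ ha1 ha2 c, hJint ⟨n+1, hn⟩ hb1 hb2 ⟨c.1+1, hc'⟩]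
      have harg : (((⟨n, hn0⟩ : Fin Γ).1:ℝ) - (c.1:ℝ))/(w:ℝ)
          = (((⟨n+1, hn⟩ : Fin Γ).1:ℝ) - (((⟨c.1+1, hc'⟩ : Fin Γ).1):ℝ))/(w:ℝ) := by
        simp only [Fin.val_mk]
        push_cast; ring
      rw [harg]
    · rw [hJ0 _ _ (by exact (by omega : ¬(c.1 ≤ n + w ∧ n ≤ c.1 + w))),
        hJ0 _ _ (by exact (by omega : ¬(c.1+1 ≤ (n+1) + w ∧ n+1 ≤ (c.1+1) + w)))]
  -- bulk columns: Σ_c(E) = Σ_{c+1}(S(E))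
  have hmid : ∀ (c : Fin Γ), 2*w ≤ c.1 → c.1 + 2 ≤ Γ - 2*w →
      ∀ (h' : c.1 + 1 < Γ),
      sigC R σ2 Γ J E c = sigC R σ2 Γ J (shiftProf Γ E0v E) ⟨c.1+1, h'⟩ := by
    intro c hc1 hc2 h'
    have key : (∑ r : Fin Γ, J r c / (R*(σ2+E r)))
        = ∑ r : Fin Γ, J r ⟨c.1+1, h'⟩ / (R*(σ2+shiftProf Γ E0v E r)) := by
      set f1 : ℕ → ℝ := fun n =>
        if h : n < Γ then J ⟨n,h⟩ c / (R*(σ2+E ⟨n,h⟩)) else 0 with hf1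
      set f2 : ℕ → ℝ := fun n =>
        if h : n < Γ then J ⟨n,h⟩ ⟨c.1+1, h'⟩ / (R*(σ2+shiftProf Γ E0v E ⟨n,h⟩)) else 0 with hf2
      have e1 : (∑ r : Fin Γ, J r c / (R*(σ2+E r))) = ∑ n ∈ Finset.range Γ, f1 n := by
        rw [← Fin.sum_univ_eq_sum_range f1 Γ]
        refine Finset.sum_congr rfl fun r _ => ?_
        simp only [hf1]
        rw [dif_pos r.isLt]
      have e2 : (∑ r : Fin Γ, J r ⟨c.1+1, h'⟩ / (R*(σ2+shiftProf Γ E0v E r)))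
          = ∑ n ∈ Finset.range Γ, f2 n := by
        rw [← Fin.sum_univ_eq_sum_range f2 Γ]
        refine Finset.sum_congr rfl fun r _ => ?_
        simp only [hf2]
        rw [dif_pos r.isLt]
      obtain ⟨m, hm⟩ : ∃ m, Γ = m + 1 := ⟨Γ - 1, by omega⟩
      have hf1m : f1 m = 0 := by
        rw [hf1]
        simp only
        rw [dif_pos (by omega : m < Γ),
          hJ0 _ _ (by exact (by omega : ¬(c.1 ≤ m + w ∧ m ≤ c.1 + w))), zero_div]
      have hf20 : f2 0 = 0 := by
        rw [hf2]
        simp only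
        rw [dif_pos (by omega : 0 < Γ),
          hJ0 _ _ (by exact (by omega : ¬(c.1+1 ≤ 0 + w ∧ 0 ≤ (c.1+1) + w))), zero_div]
      have hterm : ∀ n ∈ Finset.range m, f1 n = f2 (n+1) := by
        intro n hn
        have hn' : n + 1 < Γ := by
          simp only [Finset.mem_range] at hn; omega
        rw [hf1, hf2]
        simp only
        rw [dif_pos (by omega : n < Γ), dif_pos hn']
        have hSE : shiftProf Γ E0v E ⟨n+1, hn'⟩ = E ⟨n, by omega⟩ := by
          simp [shiftProf]
        rw [hSE, hJshift n hn' (by omega) c hc1 hc2 (by omega)]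
      rw [e1, e2]
      calc ∑ n ∈ Finset.range Γ, f1 n = ∑ n ∈ Finset.range (m+1), f1 n := by rw [hm]
        _ = (∑ n ∈ Finset.range m, f1 n) + f1 m := Finset.sum_range_succ f1 m
        _ = (∑ n ∈ Finset.range m, f2 (n+1)) + f2 0 := by
            rw [hf1m, hf20, Finset.sum_congr rfl hterm]
        _ = ∑ n ∈ Finset.range (m+1), f2 n := (Finset.sum_range_succ' f2 m).symm
        _ = ∑ n ∈ Finset.range Γ, f2 n := by rw [hm]
    unfold sigC
    rw [key]
  -- constant columns
  have hconst : ∀ (E' : Fin Γ → ℝ) (c : Fin Γ) (v : ℝ), 2*w ≤ c.1 → c.1 < Γ - 2*w →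
      (∀ r : Fin Γ, c.1 ≤ r.1 + w → r.1 ≤ c.1 + w → E' r = v) →
      sigC R σ2 Γ J E' c = sigU R σ2 v := by
    intro E' c v h1 h2 hval
    have hsum : (∑ r : Fin Γ, J r c / (R*(σ2+E' r))) = (∑ r : Fin Γ, J r c) / (R*(σ2+v)) := by
      rw [Finset.sum_div]
      refine Finset.sum_congr rfl fun r _ => ?_
      by_cases hs : c.1 ≤ r.1 + w ∧ r.1 ≤ c.1 + w
      · rw [hval r hs.1 hs.2]
      · rw [hJ0 r c hs, zero_div, zero_div]
    have hJs : (Γ:ℝ)⁻¹ * ∑ r : Fin Γ, J r c = 1 := hsym c h1 h2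
    unfold sigC sigU
    rw [hsum,
      show (Γ:ℝ)⁻¹ * ((∑ r : Fin Γ, J r c) / (R*(σ2+v)))
        = ((Γ:ℝ)⁻¹ * ∑ r : Fin Γ, J r c) * (R*(σ2+v))⁻¹ by ring,
      hJs, one_mul, Real.sqrt_inv, inv_inv]
  -- outer columns coincide
  have houter : ∀ c : Fin Γ, c.1 < 2*w ∨ Γ - 2*w ≤ c.1 →
      sigC R σ2 Γ J E c = sigC R σ2 Γ J (shiftProf Γ E0v E) c := by
    intro c hc
    have hsum : (∑ r : Fin Γ, J r c / (R*(σ2+E r)))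
        = ∑ r : Fin Γ, J r c / (R*(σ2+shiftProf Γ E0v E r)) := by
      refine Finset.sum_congr rfl fun r _ => ?_
      by_cases hs : c.1 ≤ r.1 + w ∧ r.1 ≤ c.1 + w
      · have heq : shiftProf Γ E0v E r = E r := by
          rcases hc with h1 | h1
          · have hE : E r = E0v := hplat0 r (Fin.le_def.mpr (by omega))
            by_cases h0 : r.1 = 0
            · simp only [shiftProf]
              rw [if_pos h0, hE]
            · simp only [shiftProf]
              rw [if_neg h0, hE, hplat0 _ (Fin.le_def.mpr (by simp only [Fin.val_mk]; omega))]
          · have hr1 : rmax.1 ≤ Γ - 3*w - 1 := by omega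
            have hE : E r = Emax := hplatmax r (Fin.le_def.mpr (by omega))
            have h0 : ¬ r.1 = 0 := by omega
            simp only [shiftProf]
            rw [if_neg h0, hE,
              hplatmax _ (Fin.le_def.mpr (by simp only [Fin.val_mk]; omega))]
        rw [heq]
      · rw [hJ0 r c hs, zero_div, zero_div]
    unfold sigC
    rw [hsum]
  -- boundary identifications
  have hbdry0 : sigC R σ2 Γ J (shiftProf Γ E0v E) ⟨2*w, by omega⟩ = sigU R σ2 E0v := by
    refine hconst _ _ _ (by simp) (by simp only [Fin.val_mk]; omega) ?_
    intro r hr1 hr2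
    simp only [Fin.val_mk] at hr1 hr2
    by_cases h0 : r.1 = 0
    · simp only [shiftProf]; rw [if_pos h0]
    · simp only [shiftProf]
      rw [if_neg h0, hplat0 _ (Fin.le_def.mpr (by simp only [Fin.val_mk]; omega))]
  have hbdrymax : sigC R σ2 Γ J E ⟨Γ - 2*w - 1, by omega⟩ = sigU R σ2 Emax := by
    refine hconst _ _ _ (by simp only [Fin.val_mk]; omega)
      (by simp only [Fin.val_mk]; omega) ?_
    intro r hr1 hr2
    simp only [Fin.val_mk] at hr1 hr2
    have hr1' : rmax.1 ≤ Γ - 3*w - 1 := by omega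
    exact hplatmax r (Fin.le_def.mpr (by omega))
  refine ⟨?_, fun c hc1 hc2 => hmid c hc1 hc2 (by omega), hbdry0, hbdrymax⟩
  -- the telescoping sum
  set aF : ℕ → ℝ := fun n =>
    if h : n < Γ then Su B (sigC R σ2 Γ J E ⟨n,h⟩) else 0 with haF
  set bF : ℕ → ℝ := fun n =>
    if h : n < Γ then Su B (sigC R σ2 Γ J (shiftProf Γ E0v E) ⟨n,h⟩) else 0 with hbF
  have hsumA : (∑ c : Fin Γ, Su B (sigC R σ2 Γ J E c)) = ∑ n ∈ Finset.range Γ, aF n := by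
    rw [← Fin.sum_univ_eq_sum_range aF Γ]
    refine Finset.sum_congr rfl fun r _ => ?_
    simp only [haF]
    rw [dif_pos r.isLt]
  have hsumB : (∑ c : Fin Γ, Su B (sigC R σ2 Γ J (shiftProf Γ E0v E) c))
      = ∑ n ∈ Finset.range Γ, bF n := by
    rw [← Fin.sum_univ_eq_sum_range bF Γ]
    refine Finset.sum_congr rfl fun r _ => ?_
    simp only [hbF]
    rw [dif_pos r.isLt]
  have habL : ∀ n ∈ Finset.Ico 0 (2*w), aF n = bF n := by
    intro n hn
    simp only [Finset.mem_Ico] at hn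
    rw [haF, hbF]
    simp only
    rw [dif_pos (by omega : n < Γ), dif_pos (by omega : n < Γ)]
    exact congrArg (Su B) (houter ⟨n, by omega⟩ (Or.inl hn.2))
  have habR : ∀ n ∈ Finset.Ico (Γ-2*w) Γ, aF n = bF n := by
    intro n hn
    simp only [Finset.mem_Ico] at hn
    rw [haF, hbF]
    simp only
    rw [dif_pos hn.2, dif_pos hn.2]
    exact congrArg (Su B) (houter ⟨n, hn.2⟩ (Or.inr hn.1))
  have habM : ∀ n ∈ Finset.Ico (2*w) (Γ-2*w-1), aF n = bF (n+1) := by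
    intro n hn
    simp only [Finset.mem_Ico] at hn
    rw [haF, hbF]
    simp only
    rw [dif_pos (by omega : n < Γ), dif_pos (by omega : n + 1 < Γ)]
    exact congrArg (Su B) (hmid ⟨n, by omega⟩ hn.1
      (by exact (by omega : n + 2 ≤ Γ - 2*w)) (by exact (by omega : n + 1 < Γ)))
  have hsplit : ∀ f : ℕ → ℝ, ∑ n ∈ Finset.range Γ, f n
      = ((∑ n ∈ Finset.Ico 0 (2*w), f n) + ∑ n ∈ Finset.Ico (2*w) (Γ-2*w), f n)
        + ∑ n ∈ Finset.Ico (Γ-2*w) Γ, f n := by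
    intro f
    rw [Finset.range_eq_Ico,
      ← Finset.sum_Ico_consecutive f (by omega : 0 ≤ Γ-2*w) (by omega : Γ-2*w ≤ Γ),
      ← Finset.sum_Ico_consecutive f (by omega : 0 ≤ 2*w) (by omega : 2*w ≤ Γ-2*w)]
  have hmidA : (∑ n ∈ Finset.Ico (2*w) (Γ-2*w), aF n)
      = (∑ n ∈ Finset.Ico (2*w+1) (Γ-2*w), bF n) + aF (Γ-2*w-1) := by
    have h1 : Γ - 2*w = (Γ-2*w-1) + 1 := by omega
    rw [h1, Finset.sum_Ico_succ_top (by omega : 2*w ≤ Γ-2*w-1) aF,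
      Finset.sum_congr rfl habM,
      show (∑ n ∈ Finset.Ico (2*w) (Γ-2*w-1), bF (n+1))
        = ∑ n ∈ Finset.Ico (2*w+1) (Γ-2*w-1+1), bF n from Finset.sum_Ico_add' bF _ _ 1]
    simp
  have hmidB : (∑ n ∈ Finset.Ico (2*w) (Γ-2*w), bF n)
      = bF (2*w) + ∑ n ∈ Finset.Ico (2*w+1) (Γ-2*w), bF n :=
    Finset.sum_eq_sum_Ico_succ_bot (by omega : 2*w < Γ-2*w) bF
  have haend : aF (Γ-2*w-1) = Su B (sigU R σ2 Emax) := by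
    rw [haF]
    simp only
    rw [dif_pos (by omega : Γ-2*w-1 < Γ)]
    exact congrArg (Su B) hbdrymax
  have hbstart : bF (2*w) = Su B (sigU R σ2 E0v) := by
    rw [hbF]
    simp only
    rw [dif_pos (by omega : 2*w < Γ)]
    exact congrArg (Su B) hbdry0
  rw [hsumA, hsumB, hsplit aF, hsplit bF, Finset.sum_congr rfl habL,
    Finset.sum_congr rfl habR, hmidA, hmidB, haend, hbstart]
  ring
end
end

section
/- If 0 < R < 1/((1+σ²)·2·ln(2)), then the limiting potential φ_R has a unique global minimum on [0,1] at E = 0; that is, φ_R(E) > φ_R(0) for every E ∈ (0,1]. -/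
/-
On `[0, 1]` the rate bound gives `2 ln 2 · R · (σ² + E) < 1`, so the `max` term of `φ_R`
vanishes and `φ_R` reduces to the energy term `(1/(2R)) log₂ ((σ² + E) e^{-E/(σ²+E)})`.
This is strictly increasing in `E`: `σ² < (σ² + E) e^{-E/(σ²+E)}` for `E > 0` is
`1 - x < e^{-x}` with `x = E/(σ² + E)`, scaled by `σ² + E`.
-/

open MeasureTheory ProbabilityTheory Filter Finset Real

noncomputable section

theorem lt_add_mul_exp_neg_div {s E : ℝ} (hs : 0 < s) (hE : 0 < E) :
    s < (s + E) * exp (-(E / (s + E))) := by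
  have hsE : 0 < s + E := by linarith
  have h := add_one_lt_exp (neg_ne_zero.mpr (div_pos hE hsE).ne')
  calc s = (s + E) * (-(E / (s + E)) + 1) := by field_simp; ring
    _ < (s + E) * exp (-(E / (s + E))) := mul_lt_mul_of_pos_left h hsE

theorem Uu_lt_Uu_of_pos {R σ2 E : ℝ} (hR : 0 < R) (hσ2 : 0 < σ2) (hE : 0 < E) :
    Uu R σ2 0 < Uu R σ2 E := by
  unfold Uu
  have h := lt_add_mul_exp_neg_div hσ2 hE
  have h0 : (σ2 + 0) * exp (-(0 / (σ2 + 0))) = σ2 := by simp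
  rw [h0]
  gcongr
  norm_num

theorem max_zero_one_sub_one_div_eq_zero {x : ℝ} (hx : 0 < x) (hx1 : x ≤ 1) :
    max 0 (1 - 1 / x) = 0 :=
  max_eq_left (sub_nonpos.mpr (one_le_one_div hx hx1))

theorem phiLim_eq_Uu {R σ2 E : ℝ} (hpos : 0 < 2 * log 2 * R * (σ2 + E))
    (hle : 2 * log 2 * R * (σ2 + E) ≤ 1) : phiLim R σ2 E = Uu R σ2 E := by
  rw [phiLim, max_zero_one_sub_one_div_eq_zero hpos hle, sub_zero, Uu]

/-- for `R < 1/((1+σ²)·2·ln 2)` the limiting potential has its unique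
global minimum on `[0,1]` at `E = 0`. -/
theorem phiLim_unique_min_at_zero
    (R σ2 : ℝ) (hσ2 : 0 < σ2) (hR : 0 < R)
    (hRsmall : R < 1 / ((1 + σ2) * (2 * Real.log 2))) :
    ∀ E ∈ Set.Ioc (0:ℝ) 1, phiLim R σ2 0 < phiLim R σ2 E := by
  rintro E ⟨hE0, hE1⟩
  have hlog2 : 0 < log 2 := log_pos one_lt_two
  have hR' : R * ((1 + σ2) * (2 * log 2)) < 1 := (lt_div_iff₀ (by positivity)).mp hRsmall
  have hphiLim : ∀ x, 0 ≤ x → x ≤ 1 → phiLim R σ2 x = Uu R σ2 x := fun x hx0 hx1 =>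
    phiLim_eq_Uu (by positivity) (by nlinarith [mul_pos hR hlog2])
  rw [hphiLim 0 le_rfl zero_le_one, hphiLim E hE0.le hE1]
  exact Uu_lt_Uu_of_pos hR hσ2 hE0
end
end

section
/- If 1/((1+σ²)·2·ln(2)) < R < C, where C := (1/2)·log₂(1 + 1/σ²) is the Shannon capacity of the AWGN channel with snr = 1/σ², then E = 0 is the global minimum of the limiting potential φ_R on [0,1] (φ_R(E) > φ_R(0) for E ∈ (0,1]) and E = 1 is a local minimum of φ_R (there exists δ > 0 such that φ_R(E) ≥ φ_R(1) for all E ∈ [1−δ, 1]). -/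
open MeasureTheory ProbabilityTheory Filter Finset Real

noncomputable section

/-!
Write `c = 2 ln 2 · R` and `x = σ² + E`. Then `φ_R(E)` is the minimum of the two branches
`(ln x + (σ² + b)/x − 1)/c − b`, `b ∈ {0, 1}`, the second one being active exactly when
`c x ≥ 1`. Since `ln x + a/x` is minimised exactly at `x = a`, branch `b` is minimised at
`E = b`. The capacity bound `R < C` says precisely that the minimum of branch 0 lies below that
of branch 1, so `E = 0` is the strict global minimum; the lower bound on `R` makes branch 1 the
active one on a neighbourhood of `E = 1`.
-/

namespace Real

theorem log_add_one_le_log_add_div {a x : ℝ} (ha : 0 < a) (hx : 0 < x) :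
    log a + 1 ≤ log x + a / x := by
  have h := log_le_sub_one_of_pos (div_pos ha hx)
  rw [log_div ha.ne' hx.ne'] at h
  linarith

theorem log_add_one_lt_log_add_div {a x : ℝ} (ha : 0 < a) (hx : 0 < x) (hxa : x ≠ a) :
    log a + 1 < log x + a / x := by
  have h := log_lt_sub_one_of_pos (div_pos ha hx) fun h => hxa ((div_eq_one_iff_eq hx.ne').1 h).symm
  rw [log_div ha.ne' hx.ne'] at h
  linarith

end Real

def phiBranch (R σ2 b E : ℝ) : ℝ :=
  (log (σ2 + E) + (σ2 + b) / (σ2 + E) - 1) / (2 * log 2 * R) - b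

section phiBranch

variable {R σ2 : ℝ}

theorem phiBranch_self {b : ℝ} (hb : σ2 + b ≠ 0) :
    phiBranch R σ2 b b = log (σ2 + b) / (2 * log 2 * R) - b := by
  rw [phiBranch, div_self hb, add_sub_cancel_right]

theorem phiBranch_self_le {b E : ℝ} (hR : 0 < R) (hb : 0 < σ2 + b) (hE : 0 < σ2 + E) :
    phiBranch R σ2 b b ≤ phiBranch R σ2 b E := by
  rw [phiBranch_self hb.ne', phiBranch, sub_le_sub_iff_right]
  gcongr
  linarith [log_add_one_le_log_add_div hb hE]

theorem phiBranch_self_lt {b E : ℝ} (hR : 0 < R) (hb : 0 < σ2 + b) (hE : 0 < σ2 + E)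
    (hEb : E ≠ b) : phiBranch R σ2 b b < phiBranch R σ2 b E := by
  rw [phiBranch_self hb.ne', phiBranch, sub_lt_sub_iff_right]
  gcongr
  linarith [log_add_one_lt_log_add_div hb hE (by simpa using hEb)]

theorem phiBranch_one_eq (E : ℝ) :
    phiBranch R σ2 1 E = phiBranch R σ2 0 E - (1 - 1 / (2 * log 2 * R * (σ2 + E))) := by
  simp only [phiBranch, one_div, mul_inv]
  ring

theorem phiBranch_zero_self_lt_one_self (hσ2 : 0 < σ2) (hR : 0 < R)
    (hRC : R < (1 / 2) * logb 2 (1 + 1 / σ2)) :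
    phiBranch R σ2 0 0 < phiBranch R σ2 1 1 := by
  have hc : 0 < 2 * log 2 * R := by positivity
  have hcap : 2 * log 2 * R < log (σ2 + 1) - log σ2 := by
    rw [← log_div (by positivity) hσ2.ne', add_div, div_self hσ2.ne']
    rw [logb, ← mul_div_assoc, lt_div_iff₀ (log_pos one_lt_two)] at hRC
    linarith
  rw [phiBranch_self (by linarith), phiBranch_self (by linarith), add_zero, sub_zero,
    lt_sub_iff_add_lt, div_add_one hc.ne', div_lt_div_iff_of_pos_right hc]
  linarith

end phiBranch

section phiLim

variable {R σ2 E : ℝ}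

theorem phiLim_eq_min (hE : σ2 + E ≠ 0) :
    phiLim R σ2 E = min (phiBranch R σ2 0 E) (phiBranch R σ2 1 E) := by
  have hfrac : E / (σ2 + E) = 1 - σ2 / (σ2 + E) := by field_simp; ring
  have hmin (a t : ℝ) : min a (a - t) = a - max 0 t := by simpa using min_sub_sub_left a 0 t
  rw [phiBranch_one_eq, hmin, phiLim, logb,
    log_mul hE (exp_ne_zero _), log_exp, hfrac, phiBranch]
  ring

theorem phiLim_eq_phiBranch_one (hE : 1 ≤ 2 * log 2 * R * (σ2 + E)) :
    phiLim R σ2 E = phiBranch R σ2 1 E := by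
  have hx : σ2 + E ≠ 0 := by rintro h; rw [h, mul_zero] at hE; linarith
  have : 1 / (2 * log 2 * R * (σ2 + E)) ≤ 1 := div_le_one_of_le₀ hE (by linarith)
  refine (phiLim_eq_min hx).trans (min_eq_right ?_)
  rw [phiBranch_one_eq]
  linarith

end phiLim

/-- for `1/((1+σ²)·2·ln 2) < R < C`, `E = 0` is the global minimum of
the limiting potential on `[0,1]` and `E = 1` is a local minimum. -/
theorem phiLim_global_min_zero_local_min_one
    (R σ2 : ℝ) (hσ2 : 0 < σ2)
    (hRlarge : 1 / ((1 + σ2) * (2 * Real.log 2)) < R)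
    (hRC : R < (1/2) * Real.logb 2 (1 + 1/σ2)) :
    (∀ E ∈ Set.Ioc (0:ℝ) 1, phiLim R σ2 0 < phiLim R σ2 E) ∧
    (∃ δ > (0:ℝ), ∀ E ∈ Set.Icc (1 - δ) 1, phiLim R σ2 1 ≤ phiLim R σ2 E) := by
  have hR : 0 < R := lt_trans (by positivity) hRlarge
  have hc : 0 < 2 * log 2 * R := by positivity
  have hσ2E {E : ℝ} (hE : 0 ≤ E) : 0 < σ2 + E := by linarith
  have h0 : phiLim R σ2 0 ≤ phiBranch R σ2 0 0 :=
    (phiLim_eq_min (hσ2E le_rfl).ne').trans_le (min_le_left _ _)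
  have h1 : phiLim R σ2 1 ≤ phiBranch R σ2 1 1 :=
    (phiLim_eq_min (hσ2E zero_le_one).ne').trans_le (min_le_right _ _)
  have hgap := phiBranch_zero_self_lt_one_self hσ2 hR hRC
  refine ⟨fun E ⟨hE0, _⟩ => ?_, ⟨1 + σ2 - 1 / (2 * log 2 * R), ?_, fun E ⟨hE, _⟩ => ?_⟩⟩
  · rw [phiLim_eq_min (hσ2E hE0.le).ne']
    exact lt_min (h0.trans_lt (phiBranch_self_lt hR (hσ2E le_rfl) (hσ2E hE0.le) hE0.ne'))
      (h0.trans_lt (hgap.trans_le (phiBranch_self_le hR (hσ2E zero_le_one) (hσ2E hE0.le))))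
  · rw [div_lt_iff₀ (by positivity)] at hRlarge
    rw [gt_iff_lt, sub_pos, div_lt_iff₀ hc]
    linarith
  · have hE' : 1 ≤ 2 * log 2 * R * (σ2 + E) := by
      rw [← div_le_iff₀' hc]
      linarith
    rw [phiLim_eq_phiBranch_one hE']
    exact h1.trans (phiBranch_self_le hR (hσ2E zero_le_one) (pos_of_mul_pos_right (by linarith) hc.le))
end
end

section
/- Both terms of the underlying potential are increasing in the effective noise: the entropy term S_u(Σ) is a nondecreasing function of Σ on (0,∞), and the energy term U_u(E) is a nondecreasing function of E on [0,∞) (equivalently, nondecreasing in Σ(E) = √(R(σ²+E))). -/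
open MeasureTheory ProbabilityTheory Filter Finset Real

noncomputable section

/-!
With `s = √(log₂ B) / Σ`, `log B · S_u(Σ)` is the conditional entropy `H(X | Y)` (in nats) of a
uniform index `X` given `Y = s • e_X + Z`, i.e. the expected log-loss of the Bayes posterior
`p_s(x | y) ∝ exp (s y_x)`. For `0 ≤ s' ≤ s`, Gibbs' inequality says that replacing `p_s` by the
mismatched posterior `p_{s'}` can only increase the expected log-loss, and for the fixed
predictor `p_{s'}` the log-loss only increases further when the spike is weakened from `s` to
`s'`. So `H(X | Y)` is antitone in `s`, that is, `S_u` is monotone in `Σ`. Gibbs' inequality is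
applied pointwise after writing the law of `Y` through its Cameron–Martin density and averaging
over the position of the spike.

The energy term is `(log t + σ² / t - 1) / (2 R log 2)` at `t = σ² + E`, and `log t + σ² / t`
increases for `t ≥ σ²` because `log (b / a) ≥ 1 - a / b`.
-/

open scoped ENNReal

theorem pi_update_withDensity {ι : Type*} [Fintype ι] [DecidableEq ι] {α : ι → Type*}
    [∀ i, MeasurableSpace (α i)] (μ : (i : ι) → Measure (α i)) [∀ i, SigmaFinite (μ i)]
    (i : ι) {f : α i → ℝ≥0∞} (hf : Measurable f) [SigmaFinite ((μ i).withDensity f)] :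
    Measure.pi (Function.update μ i ((μ i).withDensity f)) =
      (Measure.pi μ).withDensity fun y => f (y i) := by
  have : ∀ j, SigmaFinite (Function.update μ i ((μ i).withDensity f) j) := by
    intro j
    rcases eq_or_ne j i with rfl | hj
    · simpa
    · rw [Function.update_of_ne hj]; infer_instance
  refine Measure.pi_eq fun A hA => ?_
  rw [withDensity_apply _ (.univ_pi hA), Measure.restrict_pi_pi,
    ← lintegral_map hf (measurable_pi_apply i), Measure.pi_map_eval, lintegral_smul_measure,
    ← Finset.prod_erase_mul _ _ (Finset.mem_univ i), Function.update_self,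
    withDensity_apply _ (hA i), smul_eq_mul]
  congr 1
  refine Finset.prod_congr rfl fun j hj => ?_
  simp [Function.update_of_ne (Finset.ne_of_mem_erase hj)]

theorem gaussianReal_eq_withDensity_exp (s : ℝ) :
    gaussianReal s 1 =
      (gaussianReal 0 1).withDensity fun t => ENNReal.ofReal (exp (s * t - s ^ 2 / 2)) := by
  rw [gaussianReal_of_var_ne_zero _ one_ne_zero, gaussianReal_of_var_ne_zero _ one_ne_zero,
    ← withDensity_mul _ (measurable_gaussianPDF 0 1) (by fun_prop)]
  congr 1
  funext t
  simp only [Pi.mul_apply, gaussianPDF, gaussianPDFReal]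
  rw [← ENNReal.ofReal_mul (by positivity), mul_assoc (√_)⁻¹, ← exp_add]
  congr 3
  push_cast
  ring

instance (B : ℕ) : IsProbabilityMeasure (stdGauss B) := by
  unfold stdGauss; infer_instance

section GaussianShift

variable {B : ℕ}

theorem stdGauss_map_add_single (x : Fin B) (s : ℝ) :
    (stdGauss B).map (· + Pi.single x s) =
      (stdGauss B).withDensity fun y => ENNReal.ofReal (exp (s * y x - s ^ 2 / 2)) := by
  have hmap : ∀ i, (gaussianReal 0 1).map (· + (Pi.single x s : Fin B → ℝ) i) =
      Function.update (fun _ : Fin B => gaussianReal 0 1) x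
        ((gaussianReal 0 1).withDensity fun t => ENNReal.ofReal (exp (s * t - s ^ 2 / 2))) i := by
    intro i
    rw [gaussianReal_map_add_const, zero_add]
    rcases eq_or_ne i x with rfl | hi
    · rw [Pi.single_eq_same, Function.update_self, gaussianReal_eq_withDensity_exp]
    · rw [Pi.single_eq_of_ne hi, Function.update_of_ne hi]
  rw [stdGauss, ← pi_update_withDensity (fun _ : Fin B => gaussianReal 0 1) x
    (f := fun t => ENNReal.ofReal (exp (s * t - s ^ 2 / 2))) (by fun_prop), ← funext hmap,
    ← Measure.pi_map_pi fun _ => (measurable_add_const _).aemeasurable]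
  rfl

theorem integral_comp_add_single_stdGauss (x : Fin B) (s : ℝ) (f : (Fin B → ℝ) → ℝ) :
    ∫ z, f (z + Pi.single x s) ∂stdGauss B =
      ∫ y, exp (s * y x - s ^ 2 / 2) * f y ∂stdGauss B := by
  have h := integral_map_equiv (MeasurableEquiv.addRight (Pi.single x s)) f (μ := stdGauss B)
  simp only [MeasurableEquiv.coe_addRight, stdGauss_map_add_single] at h
  rw [← h, integral_withDensity_eq_integral_toReal_smul (by fun_prop)
      (ae_of_all _ fun _ => ENNReal.ofReal_lt_top)]
  simp [ENNReal.toReal_ofReal (exp_nonneg _)]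

theorem integrable_comp_add_single_stdGauss_iff (x : Fin B) (s : ℝ) {f : (Fin B → ℝ) → ℝ} :
    Integrable (fun z => f (z + Pi.single x s)) (stdGauss B) ↔
      Integrable (fun y => exp (s * y x - s ^ 2 / 2) * f y) (stdGauss B) := by
  have h := integrable_map_equiv (MeasurableEquiv.addRight (Pi.single x s)) f (μ := stdGauss B)
  simp only [MeasurableEquiv.coe_addRight, stdGauss_map_add_single] at h
  rw [Function.comp_def] at h
  rw [← h, integrable_withDensity_iff_integrable_smul' (by fun_prop)
      (ae_of_all _ fun _ => ENNReal.ofReal_lt_top)]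
  simp [ENNReal.toReal_ofReal (exp_nonneg _)]

theorem integral_comp_perm_stdGauss (e : Equiv.Perm (Fin B)) (f : (Fin B → ℝ) → ℝ) :
    ∫ y, f (y ∘ e) ∂stdGauss B = ∫ y, f y ∂stdGauss B := by
  have h := (measurePreserving_piCongrLeft (fun _ : Fin B => gaussianReal 0 1) e).symm
    |>.integral_comp' f
  have hsymm : ∀ y : Fin B → ℝ,
      (MeasurableEquiv.piCongrLeft (fun _ => ℝ) e).symm y = y ∘ e := fun y => by
    ext i
    simp [MeasurableEquiv.piCongrLeft]
  simp only [hsymm] at h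
  exact h

theorem integrable_abs_apply_add_stdGauss (j : Fin B) (c : ℝ) :
    Integrable (fun z => |z j + c|) (stdGauss B) :=
  integrable_comp_eval (μ := fun _ : Fin B => gaussianReal 0 1) (i := j) (f := fun t => |t + c|)
    (((memLp_id_gaussianReal 1).integrable le_rfl).add (integrable_const c)).abs

end GaussianShift

section LogLoss

variable {ι : Type*} [Fintype ι]

def logPartition (u : ℝ) (y : ι → ℝ) : ℝ := log (∑ j, exp (u * y j))

/-- `-log` of the posterior probability of the index `x` given the observation `y`, when `x` is
uniform and the observation is `u • e_x` plus standard Gaussian noise. -/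
def logLoss (u : ℝ) (x : ι) (y : ι → ℝ) : ℝ := logPartition u y - u * y x

theorem sum_exp_mul_pos (u : ℝ) (x : ι) (y : ι → ℝ) : 0 < ∑ j, exp (u * y j) :=
  Finset.sum_pos' (fun _ _ => (exp_pos _).le) ⟨x, Finset.mem_univ x, exp_pos _⟩

theorem logLoss_eq_log_sum_exp_sub (u : ℝ) (x : ι) (y : ι → ℝ) :
    logLoss u x y = log (∑ j, exp (u * (y j - y x))) := by
  have hsum : ∑ j, exp (u * (y j - y x)) = (∑ j, exp (u * y j)) * exp (-(u * y x)) := by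
    rw [Finset.sum_mul]
    exact Finset.sum_congr rfl fun j _ => by rw [← exp_add]; ring_nf
  rw [hsum, log_mul (sum_exp_mul_pos u x y).ne' (exp_ne_zero _), log_exp, logLoss, logPartition,
    sub_eq_add_neg]

theorem logLoss_nonneg (u : ℝ) (x : ι) (y : ι → ℝ) : 0 ≤ logLoss u x y := by
  rw [logLoss_eq_log_sum_exp_sub]
  refine log_nonneg ?_
  calc (1 : ℝ) = exp (u * (y x - y x)) := by simp
    _ ≤ ∑ j, exp (u * (y j - y x)) :=
      Finset.single_le_sum (f := fun j => exp (u * (y j - y x))) (fun j _ => (exp_pos _).le)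
        (Finset.mem_univ x)

theorem logLoss_le (u : ℝ) (x : ι) (y : ι → ℝ) :
    logLoss u x y ≤ log (Fintype.card ι) + 2 * |u| * ∑ j, |y j| := by
  have hexp : ∀ j, u * (y j - y x) ≤ 2 * |u| * ∑ j, |y j| := fun j => by
    have hj := Finset.single_le_sum (fun k _ => abs_nonneg (y k)) (Finset.mem_univ j)
    have hx := Finset.single_le_sum (fun k _ => abs_nonneg (y k)) (Finset.mem_univ x)
    calc u * (y j - y x) ≤ |u| * (|y j| + |y x|) :=
          (le_abs_self _).trans (by rw [abs_mul]; gcongr; exact abs_sub _ _)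
      _ ≤ 2 * |u| * ∑ j, |y j| := by nlinarith [abs_nonneg u]
  have hcard : (0 : ℝ) < Fintype.card ι := by
    have : Nonempty ι := ⟨x⟩
    exact_mod_cast Fintype.card_pos
  rw [logLoss_eq_log_sum_exp_sub, ← log_exp (2 * |u| * _), ← log_mul hcard.ne' (exp_ne_zero _)]
  refine log_le_log (sum_exp_mul_pos u x _) ?_
  calc ∑ j, exp (u * (y j - y x)) ≤ ∑ _j : ι, exp (2 * |u| * ∑ j, |y j|) :=
        Finset.sum_le_sum fun j _ => exp_le_exp.2 (hexp j)
    _ = _ := by simp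

theorem continuous_logLoss (u : ℝ) (x : ι) : Continuous (logLoss (ι := ι) u x) := by
  have : Continuous fun y : ι → ℝ => ∑ j, exp (u * y j) := by fun_prop
  exact (this.log fun y => (sum_exp_mul_pos u x y).ne').sub (by fun_prop)

theorem logLoss_comp_perm (u : ℝ) (e : Equiv.Perm ι) (x : ι) (y : ι → ℝ) :
    logLoss u x (y ∘ e) = logLoss u (e x) y := by
  simp only [logLoss, logPartition, Function.comp_apply, Equiv.sum_comp e fun j => exp (u * y j)]

theorem antitone_logLoss_add_single [DecidableEq ι] {u : ℝ} (hu : 0 ≤ u) (x : ι)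
    (y : ι → ℝ) : Antitone fun s => logLoss u x (y + Pi.single x s) := by
  intro s t hst
  simp only [logLoss_eq_log_sum_exp_sub]
  refine log_le_log (sum_exp_mul_pos u x _) (Finset.sum_le_sum fun j _ => exp_le_exp.2 ?_)
  refine mul_le_mul_of_nonneg_left ?_ hu
  rcases eq_or_ne j x with rfl | hj
  · simp
  · simp only [Pi.add_apply, Pi.single_eq_of_ne hj, Pi.single_eq_same, add_zero]
    linarith

theorem sum_exp_neg_mul_le_sum_exp_neg_mul {L M : ι → ℝ} (hL : ∑ x, exp (-L x) = 1)
    (hM : ∑ x, exp (-M x) = 1) : ∑ x, exp (-L x) * L x ≤ ∑ x, exp (-L x) * M x := by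
  have hterm : ∀ x, exp (-L x) - exp (-M x) ≤ exp (-L x) * M x - exp (-L x) * L x := fun x => by
    have h := mul_le_mul_of_nonneg_left (add_one_le_exp (L x - M x)) (exp_pos (-L x)).le
    rw [← exp_add, show -L x + (L x - M x) = -M x by ring] at h
    linarith
  have := Finset.sum_le_sum fun x (_ : x ∈ Finset.univ) => hterm x
  rw [Finset.sum_sub_distrib, Finset.sum_sub_distrib, hL, hM, sub_self] at this
  linarith

theorem exp_neg_logLoss (u : ℝ) (x : ι) (y : ι → ℝ) :
    exp (-logLoss u x y) = exp (u * y x) / ∑ j, exp (u * y j) := by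
  rw [logLoss, logPartition, neg_sub, exp_sub, exp_log (sum_exp_mul_pos u x y)]

theorem sum_exp_neg_logLoss [Nonempty ι] (u : ℝ) (y : ι → ℝ) :
    ∑ x, exp (-logLoss u x y) = 1 := by
  simp only [exp_neg_logLoss, ← Finset.sum_div]
  exact div_self (sum_exp_mul_pos u (Classical.arbitrary ι) y).ne'

theorem sum_exp_mul_logLoss_le (s u : ℝ) (y : ι → ℝ) :
    ∑ x, exp (s * y x) * logLoss s x y ≤ ∑ x, exp (s * y x) * logLoss u x y := by
  rcases isEmpty_or_nonempty ι with hι | hι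
  · simp
  have hZ := sum_exp_mul_pos s (Classical.arbitrary ι) y
  have hexp : ∀ x, exp (s * y x) = (∑ j, exp (s * y j)) * exp (-logLoss s x y) := fun x => by
    rw [exp_neg_logLoss, mul_div_cancel₀ _ hZ.ne']
  have hscale : ∀ M : ι → ℝ, ∑ x, exp (s * y x) * M x =
      (∑ j, exp (s * y j)) * ∑ x, exp (-logLoss s x y) * M x := fun M => by
    rw [Finset.mul_sum]
    exact Finset.sum_congr rfl fun x _ => by rw [hexp x, mul_assoc]
  rw [hscale, hscale]
  exact mul_le_mul_of_nonneg_left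
    (sum_exp_neg_mul_le_sum_exp_neg_mul (sum_exp_neg_logLoss s y) (sum_exp_neg_logLoss u y)) hZ.le

end LogLoss

section BayesRisk

variable {B : ℕ}

theorem integrable_logLoss_add_single (u s : ℝ) (x : Fin B) :
    Integrable (fun z => logLoss u x (z + Pi.single x s)) (stdGauss B) := by
  set v : Fin B → ℝ := Pi.single x s
  have hdom : Integrable (fun z : Fin B → ℝ => log B + 2 * |u| * ∑ j, |z j + v j|)
      (stdGauss B) :=
    (integrable_const _).add
      ((integrable_finsetSum _ fun j _ => integrable_abs_apply_add_stdGauss j (v j)).const_mul _)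
  refine hdom.mono' ((continuous_logLoss u x).comp (by fun_prop)).aestronglyMeasurable
    (ae_of_all _ fun z => ?_)
  rw [norm_of_nonneg (logLoss_nonneg u x _)]
  simpa using logLoss_le u x (z + v)

theorem integral_logLoss_add_single_eq_average (u s : ℝ) (x₀ : Fin B) :
    ∫ z, logLoss u x₀ (z + Pi.single x₀ s) ∂stdGauss B =
      (B : ℝ)⁻¹ * ∫ y, ∑ x, exp (s * y x - s ^ 2 / 2) * logLoss u x y ∂stdGauss B := by
  have hB : (B : ℝ) ≠ 0 := Nat.cast_ne_zero.2 (Fin.pos x₀).ne'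
  have hsymm : ∀ x, ∫ y, exp (s * y x - s ^ 2 / 2) * logLoss u x y ∂stdGauss B =
      ∫ y, exp (s * y x₀ - s ^ 2 / 2) * logLoss u x₀ y ∂stdGauss B := fun x => by
    rw [← integral_comp_perm_stdGauss (Equiv.swap x₀ x)]
    simp [logLoss_comp_perm]
  rw [integral_finsetSum _ fun x _ => (integrable_comp_add_single_stdGauss_iff x s).1
      (integrable_logLoss_add_single u s x),
    Finset.sum_congr rfl fun x _ => hsymm x, Finset.sum_const, Finset.card_univ,
    Fintype.card_fin, nsmul_eq_mul, inv_mul_cancel_left₀ hB, integral_comp_add_single_stdGauss]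

theorem integral_logLoss_add_single_le (s u : ℝ) (x₀ : Fin B) :
    ∫ z, logLoss s x₀ (z + Pi.single x₀ s) ∂stdGauss B ≤
      ∫ z, logLoss u x₀ (z + Pi.single x₀ s) ∂stdGauss B := by
  have hint : ∀ t, Integrable (fun y => ∑ x, exp (s * y x - s ^ 2 / 2) * logLoss t x y)
      (stdGauss B) := fun t =>
    integrable_finsetSum _ fun x _ => (integrable_comp_add_single_stdGauss_iff x s).1
      (integrable_logLoss_add_single t s x)
  have hgibbs : ∀ y : Fin B → ℝ, ∑ x, exp (s * y x - s ^ 2 / 2) * logLoss s x y ≤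
      ∑ x, exp (s * y x - s ^ 2 / 2) * logLoss u x y := fun y => by
    have hfactor : ∀ x, exp (s * y x - s ^ 2 / 2) = exp (-(s ^ 2 / 2)) * exp (s * y x) :=
      fun x => by rw [← exp_add]; ring_nf
    simp only [hfactor, mul_assoc, ← Finset.mul_sum]
    exact mul_le_mul_of_nonneg_left (sum_exp_mul_logLoss_le s u y) (exp_pos _).le
  rw [integral_logLoss_add_single_eq_average, integral_logLoss_add_single_eq_average]
  exact mul_le_mul_of_nonneg_left (integral_mono (hint s) (hint u) hgibbs) (by positivity)

end BayesRisk

/-- The conditional entropy `H(X | Y)`, in nats, of a uniformly random index `X : Fin B` given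
`Y = s • e_X + Z` with `Z` standard Gaussian; by symmetry one may condition on `X = 0`. -/
def condEntropy (B : ℕ) [NeZero B] (s : ℝ) : ℝ :=
  ∫ z : Fin B → ℝ, logLoss s 0 (z + Pi.single 0 s) ∂stdGauss B

theorem antitoneOn_condEntropy {B : ℕ} [NeZero B] : AntitoneOn (condEntropy B) (Set.Ici 0) := by
  intro a ha b _ hab
  rw [condEntropy, condEntropy]
  have hshift : ∀ z : Fin B → ℝ,
      logLoss a 0 (z + Pi.single 0 b) ≤ logLoss a 0 (z + Pi.single 0 a) :=
    fun z => antitone_logLoss_add_single ha 0 z hab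
  exact (integral_logLoss_add_single_le b a 0).trans <|
    integral_mono (integrable_logLoss_add_single a b 0) (integrable_logLoss_add_single a a 0) hshift

theorem Su_eq_condEntropy_div (B : ℕ) [NeZero B] (Sn : ℝ) :
    Su B Sn = condEntropy B (√(logb 2 B) / Sn) / log B := by
  have hs : (√(logb 2 B) / Sn) ^ 2 = logb 2 B / Sn ^ 2 := by
    rw [div_pow, sq_sqrt (logb_nonneg one_lt_two (by exact_mod_cast NeZero.one_le))]
  rw [Su, dif_pos (NeZero.pos B), condEntropy, ← integral_div]
  refine integral_congr_ae (ae_of_all _ fun z => ?_)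
  show log _ / log B = _
  congr 1
  rw [logLoss_eq_log_sum_exp_sub, ← Finset.add_sum_erase _ _ (Finset.mem_univ 0)]
  congr 2
  · simp
  · refine Finset.sum_congr rfl fun j hj => ?_
    rw [Pi.add_apply, Pi.add_apply, Pi.single_eq_same,
      Pi.single_eq_of_ne (Finset.ne_of_mem_erase hj), mul_div_assoc, ← hs]
    ring_nf

theorem monotoneOn_Su (B : ℕ) : MonotoneOn (Su B) (Set.Ioi 0) := by
  rcases Nat.eq_zero_or_pos B with rfl | hB
  · intro a _ b _ _
    simp [Su]
  have : NeZero B := ⟨hB.ne'⟩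
  intro a ha b hb hab
  rw [Su_eq_condEntropy_div, Su_eq_condEntropy_div]
  have hsnr : ∀ t ∈ Set.Ioi (0 : ℝ), √(logb 2 B) / t ∈ Set.Ici 0 := fun t ht =>
    Set.mem_Ici.2 (div_nonneg (sqrt_nonneg _) (le_of_lt ht))
  refine div_le_div_of_nonneg_right (antitoneOn_condEntropy (hsnr b hb) (hsnr a ha) ?_)
    (log_natCast_nonneg B)
  exact div_le_div_of_nonneg_left (sqrt_nonneg _) ha hab

theorem monotoneOn_log_add_div {c : ℝ} (hc : 0 < c) :
    MonotoneOn (fun t => log t + c / t) (Set.Ici c) := by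
  intro a ha b hb hab
  have ha0 : 0 < a := hc.trans_le ha
  have hb0 : 0 < b := ha0.trans_le hab
  have hlog := one_sub_inv_le_log_of_pos (div_pos hb0 ha0)
  rw [inv_div, log_div hb0.ne' ha0.ne'] at hlog
  have hfrac : c / a - c / b ≤ 1 - a / b := by
    rw [div_sub_div _ _ ha0.ne' hb0.ne', one_sub_div hb0.ne', div_le_div_iff₀ (by positivity) hb0]
    nlinarith [mul_le_mul_of_nonneg_right (Set.mem_Ici.1 ha) (sub_nonneg.2 hab)]
  show log a + c / a ≤ log b + c / b
  linarith

theorem Uu_eq (R : ℝ) {σ2 E : ℝ} (h : 0 < σ2 + E) :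
    Uu R σ2 E = (log (σ2 + E) + σ2 / (σ2 + E) - 1) / (2 * R * log 2) := by
  rw [Uu, logb, log_mul h.ne' (exp_ne_zero _), log_exp]
  field_simp
  ring

theorem monotoneOn_Uu {R σ2 : ℝ} (hR : 0 < R) (hσ2 : 0 < σ2) :
    MonotoneOn (Uu R σ2) (Set.Ici 0) := by
  intro a ha b hb hab
  have hσa : σ2 ≤ σ2 + a := le_add_of_nonneg_right ha
  have hσb : σ2 ≤ σ2 + b := le_add_of_nonneg_right hb
  rw [Uu_eq R (hσ2.trans_le hσa), Uu_eq R (hσ2.trans_le hσb)]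
  gcongr ?_ / _
  exact sub_le_sub_right (monotoneOn_log_add_div hσ2 hσa hσb (by linarith)) 1

theorem potential_terms_monotone_general
    (B : ℕ) (R σ2 : ℝ) (hR : 0 < R) (hσ2 : 0 < σ2) :
    MonotoneOn (Su B) (Set.Ioi (0:ℝ)) ∧ MonotoneOn (Uu R σ2) (Set.Ici (0:ℝ)) :=
  ⟨monotoneOn_Su B, monotoneOn_Uu hR hσ2⟩

/-- both terms of the underlying potential are increasing in the
effective noise: the entropy term `S_u` is nondecreasing on `(0,∞)` and the energy
term `U_u` is nondecreasing on `[0,∞)`. -/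
theorem potential_terms_monotone
    (B : ℕ) (hB : 2 ≤ B) (R σ2 : ℝ) (hR : 0 < R) (hσ2 : 0 < σ2) :
    MonotoneOn (Su B) (Set.Ioi (0:ℝ)) ∧ MonotoneOn (Uu R σ2) (Set.Ici (0:ℝ)) :=
  potential_terms_monotone_general B R σ2 hR hσ2
end
end
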